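/- Let 𝕋 be the k-regular tree and let 𝒫 be the bi-infinite path with vertex set ℤ. For φ : V(𝕋) → ℂ, extend the spherical mean M_φ(x,r) to all r ∈ ℤ as an even function of r. Then Δ_𝕋 M_φ(x,r) = (Δ_𝒫 + (2−k)∂_r) M_φ(x,r) for all x ∈ V(𝕋) and r ∈ ℤ≥0, where Δ_𝒫 v(r) = 2v(r) − v(r+1) − v(r−1) and ∂_r v(r) = v(r+1) − v(r). -/

import Mathlib

open scoped BigOperators

/-- Size of the sphere of radius `r` in the `k`-regular tree. -/
def sphereSize (k r : ℕ) : ℕ := if r = 0 then 1 else k * (k - 1) ^ (r - 1)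

/-- Spherical mean `M_φ(x,r) = (1/S(r)) Σ_{d(x,z)=r} φ(z)` in the `k`-regular tree. -/
noncomputable def sphericalMean {V : Type*} (G : SimpleGraph V) (k : ℕ) (φ : V → ℂ)
    (x : V) (r : ℕ) : ℂ :=
  ((sphereSize k r : ℂ))⁻¹ * ∑' z : {z : V | G.dist x z = r}, φ z.1

/-- The spherical mean extended to all `r ∈ ℤ` as an even function of `r`. -/
noncomputable def sphericalMeanZ {V : Type*} (G : SimpleGraph V) (k : ℕ) (φ : V → ℂ)
    (x : V) (r : ℤ) : ℂ :=
  sphericalMean G k φ x r.natAbs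

/-
In a tree, the distances from a fixed vertex `z` to two adjacent vertices differ by exactly one,
and a vertex at distance `n + 1` from `z` has exactly one neighbour at distance `n` (the last step
of the geodesic). So, in the `k`-regular tree, the spheres of radius `n + 1` about the neighbours
of `x` cover the sphere of radius `n + 2` about `x` once and the sphere of radius `n` exactly
`outerDegree k n` times (`k` if `n = 0`, `k - 1` otherwise), which is also the ratio
`S(n + 1) / S(n)` of sphere sizes. For the means this gives
`∑_{y ∼ x} M(y, n + 1) = M(x, n) + (k - 1) M(x, n + 2)` and `∑_{y ∼ x} M(y, 0) = k M(x, 1)`,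
and the Darboux equation is a rearrangement of these two identities.
-/

open Finset

def outerDegree (k n : ℕ) : ℕ := if n = 0 then k else k - 1

lemma outerDegree_ne_zero {k : ℕ} (hk : 2 ≤ k) (n : ℕ) : outerDegree k n ≠ 0 := by
  unfold outerDegree
  split_ifs <;> omega

lemma sphereSize_succ (k n : ℕ) : sphereSize k (n + 1) = outerDegree k n * sphereSize k n := by
  cases n <;> simp [sphereSize, outerDegree, pow_succ, mul_comm, mul_left_comm]

lemma sphereSize_ne_zero {k : ℕ} (hk : 2 ≤ k) (n : ℕ) : sphereSize k n ≠ 0 := by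
  induction n with
  | zero => simp [sphereSize]
  | succ n ih => rw [sphereSize_succ]; exact mul_ne_zero (outerDegree_ne_zero hk n) ih

lemma sphericalMeanZ_natCast {V : Type*} (G : SimpleGraph V) (k : ℕ) (φ : V → ℂ) (x : V)
    (n : ℕ) : sphericalMeanZ G k φ x n = sphericalMean G k φ x n := rfl

lemma sphericalMeanZ_neg {V : Type*} (G : SimpleGraph V) (k : ℕ) (φ : V → ℂ) (x : V) (r : ℤ) :
    sphericalMeanZ G k φ x (-r) = sphericalMeanZ G k φ x r := by
  simp [sphericalMeanZ]

namespace SimpleGraph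

variable {V : Type*} {G : SimpleGraph V}

lemma Walk.dist_le_length_of_mem_support {u v w : V} (p : G.Walk u w) (hv : v ∈ p.support) :
    G.dist u v ≤ p.length := by
  classical
  exact (dist_le _).trans (p.length_takeUntil_le_length hv)

lemma Connected.exists_adj_dist_eq_of_dist_eq_add_one (hG : G.Connected) {u v : V} {n : ℕ}
    (hv : G.dist v u = n + 1) : ∃ w, G.Adj v w ∧ G.dist w u = n := by
  obtain ⟨p, hp⟩ := hG.exists_walk_length_eq_dist v u
  cases p with
  | nil => simp at hv
  | @cons _ w _ hadj q =>
    refine ⟨w, hadj, le_antisymm ?_ ?_⟩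
    · have := dist_le q
      simp only [Walk.length_cons] at hp
      omega
    · have := hG.dist_triangle (u := v) (v := w) (w := u)
      rw [dist_eq_one_iff_adj.mpr hadj] at this
      omega

lemma IsTree.eq_of_adj_of_dist_eq (hG : G.IsTree) {u v w₁ w₂ : V} {n : ℕ}
    (hv : G.dist v u = n + 1) (h₁ : G.Adj v w₁) (h₂ : G.Adj v w₂)
    (hw₁ : G.dist w₁ u = n) (hw₂ : G.dist w₂ u = n) : w₁ = w₂ := by
  obtain ⟨p, hp, -⟩ := hG.connected.exists_path_of_dist u v
  -- a neighbour of `v` closer to `u` must be the last vertex before `v` on the path from `u`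
  have key : ∀ w, G.Adj v w → G.dist w u = n → w = p.penultimate := fun w hadj hw ↦ by
    obtain ⟨q, hq, hql⟩ := hG.connected.exists_path_of_dist u w
    have hvq : v ∉ q.support := fun hmem ↦ by
      have := q.dist_le_length_of_mem_support hmem
      rw [dist_comm] at hv hw
      omega
    exact hG.isAcyclic.eq_penultimate_of_adj_end hp hadj
      (hG.isAcyclic.mem_support_of_ne_mem_support_of_adj_of_isPath hp hq hadj hvq)
  rw [key w₁ h₁ hw₁, key w₂ h₂ hw₂]

variable [∀ v, Fintype (G.neighborSet v)] {k : ℕ}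

lemma IsTree.card_filter_neighborFinset_dist_eq (hG : G.IsTree) {u v : V} {n : ℕ}
    (hv : G.dist v u = n + 1) : #{w ∈ G.neighborFinset v | G.dist w u = n} = 1 := by
  obtain ⟨w₀, hadj, hw₀⟩ := hG.connected.exists_adj_dist_eq_of_dist_eq_add_one hv
  rw [card_eq_one]
  refine ⟨w₀, eq_singleton_iff_unique_mem.mpr ⟨by simpa [hadj], fun w hw ↦ ?_⟩⟩
  rw [mem_filter, mem_neighborFinset] at hw
  exact hG.eq_of_adj_of_dist_eq hv hw.1 hadj hw.2 hw₀

lemma IsTree.card_filter_neighborFinset_dist_eq_add_one (hG : G.IsTree)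
    (hreg : G.IsRegularOfDegree k) {u v : V} {n : ℕ} (hv : G.dist v u = n) :
    #{w ∈ G.neighborFinset v | G.dist w u = n + 1} = outerDegree k n := by
  have hcard : #(G.neighborFinset v) = k := by rw [card_neighborFinset_eq_degree, hreg v]
  cases n with
  | zero =>
    obtain rfl : v = u := hG.connected.dist_eq_zero_iff.mp hv
    rw [filter_true_of_mem fun w hw ↦
      dist_eq_one_iff_adj.mpr ((mem_neighborFinset _ _ _).mp hw).symm, hcard, outerDegree, if_pos rfl]
  | succ m =>
    -- every neighbour of `v` is one step closer to or farther from `u`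
    have hsplit : {w ∈ G.neighborFinset v | G.dist w u = m + 1 + 1}
        = {w ∈ G.neighborFinset v | ¬ G.dist w u = m} := filter_congr fun w hw ↦ by
      have := hG.dist_eq_dist_add_one_of_adj u ((G.mem_neighborFinset _ _).mp hw)
      rw [dist_comm (u := u), dist_comm (u := u)] at this
      omega
    have := card_filter_add_card_filter_not (s := G.neighborFinset v) (p := (G.dist · u = m))
    rw [hsplit, outerDegree, if_neg m.succ_ne_zero]
    rw [hG.card_filter_neighborFinset_dist_eq hv, hcard] at this
    omega

lemma Connected.finite_setOf_dist_eq (hG : G.Connected) (u : V) (n : ℕ) :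
    {v | G.dist u v = n}.Finite := by
  induction n with
  | zero => simp [hG.dist_eq_zero_iff]
  | succ n ih =>
    refine (ih.biUnion fun w _ ↦ (G.neighborSet w).toFinite).subset fun v hv ↦ ?_
    rw [Set.mem_ofPred_eq, dist_comm] at hv
    obtain ⟨w, hadj, hw⟩ := hG.exists_adj_dist_eq_of_dist_eq_add_one hv
    exact Set.mem_biUnion (by rwa [Set.mem_ofPred_eq, dist_comm]) hadj.symm

noncomputable def Connected.sphereFinset (hG : G.Connected) (u : V) (n : ℕ) : Finset V :=
  (hG.finite_setOf_dist_eq u n).toFinset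

@[simp]
lemma Connected.mem_sphereFinset (hG : G.Connected) {u v : V} {n : ℕ} :
    v ∈ hG.sphereFinset u n ↔ G.dist u v = n := by
  simp [sphereFinset]

lemma Connected.sphereFinset_one (hG : G.Connected) (u : V) :
    hG.sphereFinset u 1 = G.neighborFinset u := by
  ext v
  simp [dist_eq_one_iff_adj]

lemma IsTree.sum_neighborFinset_sum_sphereFinset {M : Type*} [AddCommMonoid M]
    (hG : G.IsTree) (hreg : G.IsRegularOfDegree k) (φ : V → M) (x : V) (n : ℕ) :
    ∑ y ∈ G.neighborFinset x, ∑ z ∈ hG.connected.sphereFinset y (n + 1), φ z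
      = outerDegree k n • ∑ z ∈ hG.connected.sphereFinset x n, φ z
        + ∑ z ∈ hG.connected.sphereFinset x (n + 2), φ z := by
  classical
  let S := hG.connected.sphereFinset
  have hdisj : Disjoint (S x n) (S x (n + 2)) := Finset.disjoint_left.mpr fun z hz hz' ↦ by
    simp only [S, Connected.mem_sphereFinset] at hz hz'
    omega
  have hswap : ∀ y z, y ∈ G.neighborFinset x ∧ z ∈ S y (n + 1) ↔
      y ∈ {w ∈ G.neighborFinset x | G.dist w z = n + 1} ∧ z ∈ S x n ∪ S x (n + 2) := by
    intro y z
    simp only [S, Connected.mem_sphereFinset, mem_filter, mem_union, mem_neighborFinset]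
    constructor
    · rintro ⟨hadj, hz⟩
      have := hG.dist_eq_dist_add_one_of_adj z hadj
      rw [dist_comm (u := z), dist_comm (u := z)] at this
      exact ⟨⟨hadj, hz⟩, by omega⟩
    · tauto
  rw [sum_comm' hswap, sum_union hdisj, smul_sum]
  simp only [sum_const]
  congr 1 <;> refine sum_congr rfl fun z hz ↦ ?_ <;>
    rw [Connected.mem_sphereFinset] at hz
  · rw [hG.card_filter_neighborFinset_dist_eq_add_one hreg hz]
  · rw [hG.card_filter_neighborFinset_dist_eq hz, one_smul]

lemma Connected.sphericalMean_eq_sum (hG : G.Connected) (φ : V → ℂ) (x : V) (n : ℕ) :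
    sphericalMean G k φ x n = (sphereSize k n : ℂ)⁻¹ * ∑ z ∈ hG.sphereFinset x n, φ z := by
  rw [sphericalMean, ← Finset.tsum_subtype]
  congr 1
  exact tsum_congr_set_coe _ (hG.finite_setOf_dist_eq x n).coe_toFinset.symm

lemma Connected.sphericalMean_zero (hG : G.Connected) (φ : V → ℂ) (x : V) :
    sphericalMean G k φ x 0 = φ x := by
  have : hG.sphereFinset x 0 = {x} := by ext; simp [hG.dist_eq_zero_iff, eq_comm]
  simp [hG.sphericalMean_eq_sum, this, sphereSize]

lemma Connected.sum_neighborFinset_sphericalMean_zero (hG : G.Connected) (hk : k ≠ 0)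
    (φ : V → ℂ) (x : V) :
    ∑ y ∈ G.neighborFinset x, sphericalMean G k φ y 0 = k * sphericalMean G k φ x 1 := by
  simp [hG.sphericalMean_zero, hG.sphericalMean_eq_sum, hG.sphereFinset_one, sphereSize, hk]

lemma IsTree.sum_neighborFinset_sphericalMean_succ (hG : G.IsTree) (hk : 2 ≤ k)
    (hreg : G.IsRegularOfDegree k) (φ : V → ℂ) (x : V) (n : ℕ) :
    ∑ y ∈ G.neighborFinset x, sphericalMean G k φ y (n + 1)
      = sphericalMean G k φ x n + (k - 1) * sphericalMean G k φ x (n + 2) := by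
  simp only [hG.connected.sphericalMean_eq_sum, ← mul_sum,
    hG.sum_neighborFinset_sum_sphereFinset hreg, nsmul_eq_mul]
  have hb : (outerDegree k (n + 1) : ℂ) = k - 1 := by
    rw [outerDegree, if_neg n.succ_ne_zero, Nat.cast_sub (by omega), Nat.cast_one]
  have hs : (sphereSize k n : ℂ) ≠ 0 := Nat.cast_ne_zero.mpr (sphereSize_ne_zero hk n)
  have hb₀ : (outerDegree k n : ℂ) ≠ 0 := Nat.cast_ne_zero.mpr (outerDegree_ne_zero hk n)
  have hb₁ : (k : ℂ) - 1 ≠ 0 := hb ▸ Nat.cast_ne_zero.mpr (outerDegree_ne_zero hk (n + 1))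
  rw [sphereSize_succ k (n + 1), sphereSize_succ k n]
  push_cast
  rw [hb]
  field_simp

end SimpleGraph

/-- Discrete Darboux equation on the `k`-regular tree:
`Δ_𝕋 M_φ(x,r) = (Δ_𝒫 + (2-k)∂_r) M_φ(x,r)` for all `r ≥ 0`, where on the bi-infinite path
`Δ_𝒫 v(r) = 2v(r) - v(r+1) - v(r-1)` and `∂_r v(r) = v(r+1) - v(r)`. -/
theorem darboux_equation {V : Type*} (G : SimpleGraph V)
    [∀ v, Fintype (G.neighborSet v)]
    (k : ℕ) (hk : 2 ≤ k) (hconn : G.Connected) (hacyc : G.IsAcyclic)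
    (hreg : G.IsRegularOfDegree k) (φ : V → ℂ) (x : V) (r : ℤ) (hr : 0 ≤ r) :
    (k : ℂ) * sphericalMeanZ G k φ x r
        - ∑ y ∈ G.neighborFinset x, sphericalMeanZ G k φ y r
      = (2 * sphericalMeanZ G k φ x r - sphericalMeanZ G k φ x (r + 1)
            - sphericalMeanZ G k φ x (r - 1))
        + (2 - (k : ℂ)) * (sphericalMeanZ G k φ x (r + 1) - sphericalMeanZ G k φ x r) := by
  have hG : G.IsTree := ⟨hconn, hacyc⟩
  lift r to ℕ using hr
  cases r with
  | zero =>
    rw [show ((0 : ℕ) : ℤ) - 1 = -((1 : ℕ) : ℤ) by rfl, sphericalMeanZ_neg,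
      show ((0 : ℕ) : ℤ) + 1 = ((1 : ℕ) : ℤ) by rfl]
    simp only [sphericalMeanZ_natCast,
      hconn.sum_neighborFinset_sphericalMean_zero (by omega : k ≠ 0)]
    ring
  | succ n =>
    rw [show ((n + 1 : ℕ) : ℤ) + 1 = ((n + 2 : ℕ) : ℤ) by push_cast; ring,
      show ((n + 1 : ℕ) : ℤ) - 1 = (n : ℤ) by push_cast; ring]
    simp only [sphericalMeanZ_natCast, hG.sum_neighborFinset_sphericalMean_succ hk hreg]
    ring
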